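/- In the Chevalley–Eilenberg complex of the 4-dimensional nilpotent Lie algebra 𝔤 with structure equations de¹ = de² = 0, de³ = -e¹∧e², de⁴ = -e¹∧e³, the closed 1-form e¹ and the symplectic form ω = e¹∧e⁴ + e²∧e³ satisfy: ω ∧ e¹ = e¹∧e²∧e³ = d(e⁴∧e²). Hence the cohomology class of ω∧e¹ in degree-3 Lie algebra cohomology vanishes while the class of e¹ in degree-1 cohomology is nonzero; therefore the map [ω∧·] : H¹(𝔤) → H³(𝔤) is not injective and the Hard Lefschetz condition fails. -/
import Mathlib


open Module

/-- Chevalley–Eilenberg differential of a 1-form: `(dα)(x,y) = -α([x,y])`. -/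
def ceD1 {L : Type*} [LieRing L] [LieAlgebra ℝ L] (α : L →ₗ[ℝ] ℝ) : L → L → ℝ :=
  fun x y => -α ⁅x, y⁆

/-- Wedge of two 1-forms. -/
def wedge11 {L : Type*} [LieRing L] [LieAlgebra ℝ L] (α β : L →ₗ[ℝ] ℝ) : L → L → ℝ :=
  fun x y => α x * β y - α y * β x

/-- Chevalley–Eilenberg differential of a 2-form:
`(dβ)(x,y,z) = -β([x,y],z) + β([x,z],y) - β([y,z],x)`. -/
def ceD2 {L : Type*} [LieRing L] [LieAlgebra ℝ L] (β : L → L → ℝ) : L → L → L → ℝ :=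
  fun x y z => -β ⁅x, y⁆ z + β ⁅x, z⁆ y - β ⁅y, z⁆ x

/-- Wedge of a 2-form with a 1-form:
`(β∧α)(x,y,z) = β(x,y)α(z) + β(y,z)α(x) + β(z,x)α(y)`. -/
def wedge21 {L : Type*} [LieRing L] [LieAlgebra ℝ L]
    (β : L → L → ℝ) (α : L →ₗ[ℝ] ℝ) : L → L → L → ℝ :=
  fun x y z => β x y * α z + β y z * α x + β z x * α y

/-- Wedge of three 1-forms (the determinant expression). -/
def wedge111 {L : Type*} [LieRing L] [LieAlgebra ℝ L]
    (α β γ : L →ₗ[ℝ] ℝ) : L → L → L → ℝ :=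
  fun x y z =>
    α x * β y * γ z - α x * β z * γ y + α y * β z * γ x
      - α y * β x * γ z + α z * β x * γ y - α z * β y * γ x

lemma bracket_eq_aux {L : Type*} [LieRing L] [LieAlgebra ℝ L]
    (e : Basis (Fin 4) ℝ L)
    (h12 : ⁅e 0, e 1⁆ = e 2) (h13 : ⁅e 0, e 2⁆ = e 3)
    (h14 : ⁅e 0, e 3⁆ = 0) (h23 : ⁅e 1, e 2⁆ = 0)
    (h24 : ⁅e 1, e 3⁆ = 0) (h34 : ⁅e 2, e 3⁆ = 0) (x y : L) :
    ⁅x, y⁆ = (e.coord 0 x * e.coord 1 y - e.coord 1 x * e.coord 0 y) • e 2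
      + (e.coord 0 x * e.coord 2 y - e.coord 2 x * e.coord 0 y) • e 3 := by
  have hx := e.sum_repr x
  have hy := e.sum_repr y
  calc ⁅x, y⁆ = ⁅∑ i, e.repr x i • e i, ∑ j, e.repr y j • e j⁆ := by rw [hx, hy]
    _ = _ := by
      rw [Fin.sum_univ_four, Fin.sum_univ_four]
      simp only [add_lie, lie_add, smul_lie, lie_smul, lie_self, h12, h13, h14, h23, h24, h34,
        ← lie_skew (e 1) (e 0), ← lie_skew (e 2) (e 0), ← lie_skew (e 3) (e 0),
        ← lie_skew (e 2) (e 1), ← lie_skew (e 3) (e 1), ← lie_skew (e 3) (e 2),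
        h12, h13, h14, h23, h24, h34, Basis.coord_apply,
        smul_zero, smul_neg, smul_smul]
      module

/-- For the 4-dimensional nilpotent Lie algebra with
`de³ = -e¹∧e²`, `de⁴ = -e¹∧e³` and `ω = e¹∧e⁴ + e²∧e³`, one has
`ω ∧ e¹ = e¹∧e²∧e³ = d(e⁴∧e²)`; the 1-form `e¹` is closed and nonzero
(hence its degree-1 cohomology class is nonzero) while its image `ω∧e¹`
is exact, so the map `[ω∧·] : H¹(𝔤) → H³(𝔤)` is not injective and the
Hard Lefschetz condition fails. -/
theorem hard_lefschetz_fails_for_nilmanifold_algebra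
    {L : Type*} [LieRing L] [LieAlgebra ℝ L]
    (e : Basis (Fin 4) ℝ L)
    (h12 : ⁅e 0, e 1⁆ = e 2) (h13 : ⁅e 0, e 2⁆ = e 3)
    (h14 : ⁅e 0, e 3⁆ = 0) (h23 : ⁅e 1, e 2⁆ = 0)
    (h24 : ⁅e 1, e 3⁆ = 0) (h34 : ⁅e 2, e 3⁆ = 0) :
    (wedge21 (fun x y => wedge11 (e.coord 0) (e.coord 3) x y
        + wedge11 (e.coord 1) (e.coord 2) x y) (e.coord 0)
      = wedge111 (e.coord 0) (e.coord 1) (e.coord 2)) ∧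
    (wedge21 (fun x y => wedge11 (e.coord 0) (e.coord 3) x y
        + wedge11 (e.coord 1) (e.coord 2) x y) (e.coord 0)
      = ceD2 (wedge11 (e.coord 3) (e.coord 1))) ∧
    ceD1 (e.coord 0) = (fun _ _ => 0) ∧
    e.coord 0 ≠ 0 := by
  have hb := bracket_eq_aux e h12 h13 h14 h23 h24 h34
  have hc : ∀ (i : Fin 4) (a b : ℝ), e.coord i (a • e 2 + b • e 3)
      = a * (if i = 2 then 1 else 0) + b * (if i = 3 then 1 else 0) := by
    intro i a b
    simp [Basis.coord_apply, Basis.repr_self, Finsupp.single_apply, eq_comm]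
  refine ⟨?_, ?_, ?_, ?_⟩
  · funext x y z
    simp only [wedge21, wedge11, wedge111]
    ring
  · funext x y z
    simp only [wedge21, wedge11, wedge111, ceD2, hb, map_add, map_smul, hc]
    simp only [Fin.reduceEq, if_false, if_true]
    ring
  · funext x y
    simp only [ceD1, hb, hc]
    simp only [Fin.reduceEq, if_false, if_true]
    ring
  · intro h
    have := congrArg (fun f => f (e 0)) h
    simp [Basis.coord_apply, Basis.repr_self] at this
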